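/- For a graph G in which every component of G[D] contains a cycle for a given edge set D, contracting in B(G) an element e of D that corresponds to a subdivided edge (an edge with an endpoint of degree 2 in G[D]) yields a double circuit D \ {e} of B(G)/e of the same degree as D, whenever D is a double circuit of B(G) of rank at least 1. -/

import Mathlib

open Set

namespace Paper

/-! ### Multigraphs, walks, cycles -/

/-- A multigraph on vertex type `V` with edge type `E`: each edge has an
unordered pair of endpoints (possibly equal, giving a loop). -/
structure Multigraph (V : Type*) (E : Type*) where
  inc : E → Sym2 V

namespace Multigraph

variable {V E : Type*}

/-- `G.IsWalk I u es vs`: starting at vertex `u` and using only edges in `I`,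
the edges `es` form a walk that successively visits the vertices `vs`. -/
inductive IsWalk (G : Multigraph V E) (I : Set E) : V → List E → List V → Prop
  | nil (v : V) : IsWalk G I v [] []
  | cons {u v : V} {e : E} {es : List E} {vs : List V} :
      e ∈ I → G.inc e = s(u, v) → IsWalk G I v es vs → IsWalk G I u (e :: es) (v :: vs)

/-- A walk from `u` to `w` inside the edge set `I`. -/
def IsWalkFrom (G : Multigraph V E) (I : Set E) (u : V) (es : List E) (vs : List V)
    (w : V) : Prop :=
  G.IsWalk I u es vs ∧ (u :: vs).getLast (by simp) = w

/-- `u` and `w` are joined by a walk using edges of `I` (same component of `G[I]`). -/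
def Reachable (G : Multigraph V E) (I : Set E) (u w : V) : Prop :=
  ∃ es vs, G.IsWalkFrom I u es vs w

/-- A cycle based at `v` using edges of `I`: a nonempty closed walk with no repeated
edges and no repeated vertices (except for the base point).  A loop is a cycle of
length `1` and a pair of parallel edges forms a cycle of length `2`. -/
def IsCycle (G : Multigraph V E) (I : Set E) (v : V) (es : List E) (vs : List V) : Prop :=
  G.IsWalkFrom I v es vs v ∧ es ≠ [] ∧ es.Nodup ∧ vs.Nodup

/-- `C` is the edge set of a cycle of the subgraph `G[I]`. -/
def IsCycleIn (G : Multigraph V E) (I : Set E) (C : Set E) : Prop :=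
  ∃ v es vs, G.IsCycle I v es vs ∧ C = {e | e ∈ es}

/-- A path from `u` to `w`: a walk with pairwise distinct vertices. -/
def IsPath (G : Multigraph V E) (I : Set E) (u : V) (es : List E) (vs : List V)
    (w : V) : Prop :=
  G.IsWalkFrom I u es vs w ∧ (u :: vs).Nodup

/-- The vertices covered by an edge set `D`; the vertex set of `G[D]`. -/
def verts (G : Multigraph V E) (D : Set E) : Set V := {v | ∃ e ∈ D, v ∈ G.inc e}

/-- The degree of `v` in the subgraph `G[D]` (loops count twice). -/
noncomputable def degree (G : Multigraph V E) (D : Set E) (v : V) : ℕ :=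
  {e ∈ D | v ∈ G.inc e}.ncard + {e ∈ D | G.inc e = s(v, v)}.ncard

/-- Every connected component of `G[I]` contains at most one cycle:
any two cycles of `G[I]` lying in the same component coincide. -/
def BicircIndep (G : Multigraph V E) (I : Set E) : Prop :=
  ∀ C₁ C₂ : Set E, G.IsCycleIn I C₁ → G.IsCycleIn I C₂ →
    (∃ u w, u ∈ G.verts C₁ ∧ w ∈ G.verts C₂ ∧ G.Reachable I u w) → C₁ = C₂

/-- `M` is the bicircular matroid `B(G)` of the multigraph `G`. -/
def IsBicircularOf (G : Multigraph V E) (M : Matroid E) : Prop :=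
  M.E = univ ∧ ∀ I : Set E, M.Indep I ↔ G.BicircIndep I

end Multigraph

/-! ### Matroid notions -/

variable {α : Type*}

/-- The (extended) rank of a set in a matroid. -/
noncomputable def eRk (M : Matroid α) (X : Set α) : ℕ∞ :=
  ⨆ I ∈ {I | M.Indep I ∧ I ⊆ X}, I.encard

/-- A circuit: a minimal dependent set. -/
def Circuit (M : Matroid α) (C : Set α) : Prop :=
  M.Dep C ∧ ∀ D ⊂ C, ¬ M.Dep D

/-- A double circuit: a finite set `D` with `r(D) = |D| - 2` whose rank does not drop
when any single element is removed. -/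
def DoubleCircuit (M : Matroid α) (D : Set α) : Prop :=
  D ⊆ M.E ∧ D.Finite ∧ eRk M D + 2 = D.encard ∧ ∀ d ∈ D, eRk M (D \ {d}) = eRk M D

/-- `f` is a circuit partition of `D`: a partition of `D` into nonempty parts such that the
circuits of `M` contained in `D` are exactly the complements in `D` of the parts. -/
def CircuitPartition (M : Matroid α) (D : Set α) {k : ℕ} (f : Fin k → Set α) : Prop :=
  (∀ i, (f i).Nonempty) ∧ (∀ i j : Fin k, i ≠ j → Disjoint (f i) (f j)) ∧
    (⋃ i, f i) = D ∧ ∀ C : Set α, (Circuit M C ∧ C ⊆ D) ↔ ∃ i, C = D \ f i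

/-- A part of a partition is singular if it has exactly one element. -/
def PositiveDoubleCircuit (M : Matroid α) (D : Set α) : Prop :=
  DoubleCircuit M D ∧ ∃ (k : ℕ) (f : Fin k → Set α), CircuitPartition M D f ∧
    {i : Fin k | (f i).encard ≠ 1}.ncard < {i : Fin k | (f i).encard = 1}.ncard

/-- A hyperplane (copoint): a maximal proper flat. -/
def Hyperplane (M : Matroid α) (H : Set α) : Prop :=
  M.IsFlat H ∧ H ≠ M.E ∧ ∀ F, M.IsFlat F → H ⊂ F → F = M.E

/-- A coline: a flat of rank `r(M) - 2`. -/
def Coline (M : Matroid α) (L : Set α) : Prop :=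
  M.IsFlat L ∧ eRk M L + 2 = eRk M M.E

/-- A positive coline: more simple copoints on `L` than multiple copoints on `L`. -/
def PositiveColine (M : Matroid α) (L : Set α) : Prop :=
  Coline M L ∧
    {H | Hyperplane M H ∧ L ⊆ H ∧ (H \ L).encard ≠ 1}.ncard <
      {H | Hyperplane M H ∧ L ⊆ H ∧ (H \ L).encard = 1}.ncard

/-- Deletion of a set of elements. -/
def delete (M : Matroid α) (D : Set α) : Matroid α := M.restrict (M.E \ D)

/-- Contraction of a set of elements. -/
def contract (M : Matroid α) (C : Set α) : Matroid α := (delete M✶ C)✶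

/-- `N` is a minor of `M`. -/
def IsMinorOf (N M : Matroid α) : Prop := ∃ C D : Set α, N = delete (contract M C) D

/-- `M` is (isomorphic to) the uniform matroid `U_{r,n}`. -/
def IsUniform (r n : ℕ) {β : Type*} (M : Matroid β) : Prop :=
  M.E.encard = n ∧ ∀ I ⊆ M.E, (M.Indep I ↔ I.encard ≤ (r : ℕ∞))

/-- A simple matroid: every set of at most two elements of the ground set is independent. -/
def IsSimple (M : Matroid α) : Prop := ∀ X ⊆ M.E, X.encard ≤ 2 → M.Indep X

/-!
If `v` is the degree-2 end of `e` in `G[D]`, then either `e` is a loop at `v` and the only edge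
of `D` at `v`, or `v` meets exactly one further edge `g ∈ D`, which is not a loop.  In the first
case `e` is a coloop of `B(G)|D`, which a double circuit cannot have.  In the second case `g` is a
pendant edge of `G[D \ {e}]`, so it lies on no cycle and on no path between cycles; hence
`D \ {e}` is not a circuit of `B(G)`.  For a nonloop `e` of a double circuit `D` with `D \ {e}`
not a circuit, `C ↦ C \ {e}` is a bijection from the circuits of `M` inside `D` to those of
`M ／ e` inside `D \ {e}`: a circuit `C ∌ e` stays a circuit unless `e ∈ cl(C)`, and then
`C ∪ {e}` has nullity two, which in a double circuit forces `C ∪ {e} = D`.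
-/

namespace Multigraph

variable {V E : Type*} {G : Multigraph V E} {I J C D : Set E} {u v v' w x y : V}
  {es : List E} {vs : List V} {e f g : E}

def Adj (G : Multigraph V E) (I : Set E) (u w : V) : Prop := ∃ f ∈ I, G.inc f = s(u, w)

lemma IsWalk.mem_of_mem (h : G.IsWalk I u es vs) (hf : f ∈ es) : f ∈ I := by
  induction h with
  | nil => simp at hf
  | cons hf' _ _ ih =>
    rcases List.mem_cons.1 hf with rfl | hf
    exacts [hf', ih hf]

lemma IsWalk.mono (h : G.IsWalk I u es vs) (hJ : ∀ f ∈ es, f ∈ J) : G.IsWalk J u es vs := by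
  induction h with
  | nil v => exact .nil v
  | cons _ hinc _ ih =>
    exact .cons (hJ _ List.mem_cons_self) hinc (ih fun f hf => hJ f (List.mem_cons_of_mem _ hf))

lemma IsWalk.mem_of_mem_inc (h : G.IsWalk I u es vs) (hf : f ∈ es) (hx : x ∈ G.inc f) :
    x ∈ u :: vs := by
  induction h with
  | nil => simp at hf
  | cons _ hinc _ ih =>
    rcases List.mem_cons.1 hf with rfl | hf
    · rw [hinc, Sym2.mem_iff] at hx
      rcases hx with rfl | rfl <;> simp
    · exact List.mem_cons_of_mem _ (ih hf)

lemma IsWalk.exists_mem_inc (h : G.IsWalk I u es vs) (hx : x ∈ vs) :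
    ∃ f ∈ es, x ∈ G.inc f := by
  induction h with
  | nil => simp at hx
  | @cons u v f es vs _ hinc _ ih =>
    rcases List.mem_cons.1 hx with rfl | hx
    · exact ⟨f, List.mem_cons_self, by rw [hinc]; exact Sym2.mem_mk_right _ _⟩
    · obtain ⟨f', hf', hxf'⟩ := ih hx
      exact ⟨f', List.mem_cons_of_mem _ hf', hxf'⟩

lemma IsWalk.reflTransGen_adj (h : G.IsWalk I u es vs) :
    Relation.ReflTransGen (G.Adj I) u ((u :: vs).getLast (by simp)) := by
  induction h with
  | nil => exact .refl
  | cons hf hinc _ ih =>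
    rw [List.getLast_cons_cons]
    exact .head ⟨_, hf, hinc⟩ ih

lemma reachable_iff_reflTransGen : G.Reachable I u w ↔ Relation.ReflTransGen (G.Adj I) u w := by
  constructor
  · rintro ⟨es, vs, hw, rfl⟩
    exact hw.reflTransGen_adj
  · intro h
    induction h using Relation.ReflTransGen.head_induction_on with
    | refl => exact ⟨[], [], .nil w, rfl⟩
    | head hadj _ ih =>
      obtain ⟨f, hf, hinc⟩ := hadj
      obtain ⟨es, vs, hw, hlast⟩ := ih
      exact ⟨f :: es, _ :: vs, .cons hf hinc hw, by rwa [List.getLast_cons_cons]⟩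

lemma IsCycle.mono (hc : G.IsCycle I y es vs) (hJ : ∀ f ∈ es, f ∈ J) : G.IsCycle J y es vs :=
  ⟨⟨hc.1.1.mono hJ, hc.1.2⟩, hc.2⟩

lemma IsCycleIn.subset (hC : G.IsCycleIn I C) : C ⊆ I := by
  obtain ⟨y, es, vs, hc, rfl⟩ := hC
  exact fun f hf => hc.1.1.mem_of_mem hf

lemma IsCycleIn.nonempty (hC : G.IsCycleIn I C) : C.Nonempty := by
  obtain ⟨y, es, vs, hc, rfl⟩ := hC
  exact List.exists_mem_of_ne_nil _ hc.2.1

lemma notMem_verts_of_isCycleIn (hC : G.IsCycleIn I C) (hx : ∀ f ∈ I, x ∉ G.inc f) :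
    x ∉ G.verts C := fun ⟨f, hf, hxf⟩ => hx f (hC.subset hf) hxf

lemma bicircIndep_singleton (e : E) : G.BicircIndep {e} := by
  intro C₁ C₂ h₁ h₂ _
  rw [h₁.nonempty.subset_singleton_iff.1 h₁.subset,
    h₂.nonempty.subset_singleton_iff.1 h₂.subset]

section IsolatedLoop

variable (hloop : G.inc e = s(x, x)) (hx : ∀ f ∈ I, x ∉ G.inc f)
include hloop

lemma Reachable.of_insert_loop (h : G.Reachable (insert e I) u w) : G.Reachable I u w := by
  rw [reachable_iff_reflTransGen] at h ⊢
  refine Relation.reflTransGen_closed ?_ _ _ h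
  rintro y z ⟨f, hf, hinc⟩
  rcases hf with rfl | hf
  · rw [hloop, Sym2.eq_iff] at hinc
    obtain ⟨rfl, rfl⟩ | ⟨rfl, rfl⟩ := hinc <;> rfl
  · exact .single ⟨f, hf, hinc⟩

include hx

lemma eq_loop_iff_of_inc_eq (hf : f ∈ insert e I) (hinc : G.inc f = s(y, w)) :
    (f = e ↔ y = x) ∧ (w = x ↔ y = x) := by
  rcases hf with rfl | hf
  · rw [hloop, Sym2.eq_iff] at hinc
    obtain ⟨rfl, rfl⟩ | ⟨rfl, rfl⟩ := hinc <;> simp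
  · have hfe : f ≠ e := by
      rintro rfl
      exact hx f hf (hloop ▸ Sym2.mem_mk_left x x)
    have hy : y ≠ x := by rintro rfl; exact hx f hf (hinc ▸ Sym2.mem_mk_left _ _)
    have hw : w ≠ x := by rintro rfl; exact hx f hf (hinc ▸ Sym2.mem_mk_right _ _)
    simp [hfe, hy, hw]

lemma IsWalk.eq_loop_iff (h : G.IsWalk (insert e I) u es vs) : ∀ f ∈ es, f = e ↔ u = x := by
  induction h with
  | nil => simp
  | cons hf hinc _ ih =>
    obtain ⟨hfe, hstep⟩ := eq_loop_iff_of_inc_eq hloop hx hf hinc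
    intro f' hf'
    rcases List.mem_cons.1 hf' with rfl | hf'
    exacts [hfe, (ih f' hf').trans hstep]

lemma IsCycleIn.eq_loop_or_isCycleIn (hC : G.IsCycleIn (insert e I) C) :
    C = {e} ∨ G.IsCycleIn I C := by
  obtain ⟨y, es, vs, hc, rfl⟩ := hC
  have hes := hc.1.1.eq_loop_iff hloop hx
  by_cases hy : y = x
  · left
    ext f
    refine ⟨fun hf => (hes f hf).2 hy, ?_⟩
    rintro rfl
    obtain ⟨f, hf⟩ := List.exists_mem_of_ne_nil _ hc.2.1
    exact (hes f hf).2 hy ▸ hf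
  · refine .inr ⟨y, es, vs, hc.mono fun f hf => ?_, rfl⟩
    exact (hc.1.1.mem_of_mem hf).resolve_left fun hfe => hy ((hes f hf).1 hfe)

lemma bicircIndep_insert_loop (hI : G.BicircIndep I) : G.BicircIndep (insert e I) := by
  have hloop_verts : ∀ z ∈ G.verts {e}, z = x := by
    rintro z ⟨f, rfl, hz⟩
    rwa [hloop, Sym2.mem_iff, or_self] at hz
  have hreach : ∀ z z', G.Reachable I z z' → (z = x ↔ z' = x) := by
    intro z z' h
    rw [reachable_iff_reflTransGen] at h
    induction h with
    | refl => rfl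
    | tail _ hadj ih =>
      obtain ⟨f, hf, hinc⟩ := hadj
      rw [ih, ← (eq_loop_iff_of_inc_eq hloop hx (mem_insert_of_mem e hf) hinc).2]
  rintro C₁ C₂ h₁ h₂ ⟨u, w, hu, hw, huw⟩
  have huw' := huw.of_insert_loop hloop
  rcases h₁.eq_loop_or_isCycleIn hloop hx with rfl | h₁ <;>
    rcases h₂.eq_loop_or_isCycleIn hloop hx with rfl | h₂
  · rfl
  · exact (notMem_verts_of_isCycleIn h₂ hx ((hreach u w huw').1 (hloop_verts u hu) ▸ hw)).elim
  · exact (notMem_verts_of_isCycleIn h₁ hx ((hreach u w huw').2 (hloop_verts w hw) ▸ hu)).elim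
  · exact hI C₁ C₂ h₁ h₂ ⟨u, w, hu, hw, huw'⟩

end IsolatedLoop

section PendantEdge

variable (hv : ∀ f ∈ I, v ∈ G.inc f → f = g)
include hv

lemma IsWalk.getLastD_eq_of_pendant (h : G.IsWalk I u es vs) (hnd : es.Nodup) (hvs : v ∈ vs) :
    vs.getLastD u = v := by
  induction h with
  | nil => simp at hvs
  | @cons u u₁ f es vs hf hinc hw ih =>
    rw [List.getLastD_cons]
    rcases List.mem_cons.1 hvs with rfl | hvs
    · have hfg : f = g := hv f hf (hinc ▸ Sym2.mem_mk_right _ _)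
      cases hw with
      | nil => rfl
      | cons hf' hinc' _ =>
        have hf'g := hv _ hf' (hinc' ▸ Sym2.mem_mk_left _ _)
        simp [hfg, hf'g] at hnd
    · exact ih (List.nodup_cons.1 hnd).2 hvs

variable (hg : G.inc g = s(v, v')) (hvv' : v ≠ v')
include hg hvv'

lemma IsCycle.pendant_notMem (hc : G.IsCycle I y es vs) : g ∉ es := by
  obtain ⟨⟨hw, hclosed⟩, -, hnd, -⟩ := hc
  rw [List.getLast_eq_getLastD] at hclosed
  intro hges
  have hy : y = v := by
    rcases List.mem_cons.1 (hw.mem_of_mem_inc hges (hg ▸ Sym2.mem_mk_left v v')) with h | h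
    · exact h.symm
    · rw [← hclosed, hw.getLastD_eq_of_pendant hv hnd h]
  subst hy
  cases hw with
  | nil => simp at hges
  | @cons _ z f es' vs' hf hinc hrest =>
    have hfg : f = g := hv f hf (hinc ▸ Sym2.mem_mk_left _ _)
    subst hfg
    have hz : z = v' := Sym2.congr_right.1 (hinc.symm.trans hg)
    rw [List.getLastD_cons, ← List.getLast_eq_getLastD (List.cons_ne_nil z vs')] at hclosed
    have hyvs : y ∈ vs' := by
      rcases List.mem_cons.1 (hclosed ▸ List.getLast_mem (List.cons_ne_nil _ _)) with h | h
      exacts [absurd (h.trans hz) hvv', h]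
    obtain ⟨f', hf', hyf'⟩ := hrest.exists_mem_inc hyvs
    exact (List.nodup_cons.1 hnd).1 (hv f' (hrest.mem_of_mem hf') hyf' ▸ hf')

lemma IsCycleIn.diff_pendant (hC : G.IsCycleIn I C) : G.IsCycleIn (I \ {g}) C := by
  obtain ⟨y, es, vs, hc, rfl⟩ := hC
  refine ⟨y, es, vs, hc.mono fun f hf => ⟨hc.1.1.mem_of_mem hf, ?_⟩, rfl⟩
  rintro rfl
  exact hc.pendant_notMem hv hg hvv' hf

/-- Contracting the pendant edge `g` onto `v'` maps walks of `G[I]` to walks of `G[I \ {g}]`. -/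
lemma Reachable.diff_pendant (h : G.Reachable I u w) (hu : u ≠ v) (hw : w ≠ v) :
    G.Reachable (I \ {g}) u w := by
  classical
  rw [reachable_iff_reflTransGen] at h ⊢
  let φ : V → V := fun z => if z = v then v' else z
  have hφ := Relation.ReflTransGen.lift' (p := G.Adj (I \ {g})) φ ?_ _ _ h
  · simpa [φ, Function.onFun, hu, hw] using hφ
  rintro y z ⟨f, hf, hinc⟩
  by_cases hfg : f = g
  · subst hfg
    rw [hg, Sym2.eq_iff] at hinc
    obtain ⟨rfl, rfl⟩ | ⟨rfl, rfl⟩ := hinc <;> simp [φ, Function.onFun] <;> rfl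
  · have hy : y ≠ v := by rintro rfl; exact hfg (hv f hf (hinc ▸ Sym2.mem_mk_left _ _))
    have hz : z ≠ v := by rintro rfl; exact hfg (hv f hf (hinc ▸ Sym2.mem_mk_right _ _))
    simpa [φ, Function.onFun, hy, hz] using
      Relation.ReflTransGen.single ⟨f, ⟨hf, hfg⟩, hinc⟩

lemma BicircIndep.of_diff_pendant (hI : G.BicircIndep (I \ {g})) : G.BicircIndep I := by
  have hv' : ∀ f ∈ I \ {g}, v ∉ G.inc f := fun f hf hvf => hf.2 (hv f hf.1 hvf)
  rintro C₁ C₂ h₁ h₂ ⟨u, w, hu, hw, huw⟩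
  have h₁' := h₁.diff_pendant hv hg hvv'
  have h₂' := h₂.diff_pendant hv hg hvv'
  refine hI C₁ C₂ h₁' h₂' ⟨u, w, hu, hw, huw.diff_pendant hv hg hvv' ?_ ?_⟩
  · rintro rfl; exact notMem_verts_of_isCycleIn h₁' hv' hu
  · rintro rfl; exact notMem_verts_of_isCycleIn h₂' hv' hw

end PendantEdge

lemma degree_eq_two_cases (hD : D.Finite) (he : e ∈ D) (hve : v ∈ G.inc e)
    (hdeg : G.degree D v = 2) :
    (G.inc e = s(v, v) ∧ ∀ f ∈ D, v ∈ G.inc f → f = e) ∨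
      ∃ g ∈ D, ∃ v', g ≠ e ∧ G.inc g = s(v, v') ∧ v ≠ v' ∧
        ∀ f ∈ D, v ∈ G.inc f → f = e ∨ f = g := by
  set A := {f ∈ D | v ∈ G.inc f}
  set B := {f ∈ D | G.inc f = s(v, v)}
  have hdeg' : A.ncard + B.ncard = 2 := hdeg
  have hA : A.Finite := hD.subset (sep_subset _ _)
  have hBA : B ⊆ A := fun f hf => ⟨hf.1, hf.2 ▸ Sym2.mem_mk_left v v⟩
  have hAe : (A \ {e}).ncard + 1 = A.ncard := ncard_sdiff_singleton_add_one ⟨he, hve⟩ hA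
  by_cases hloop : G.inc e = s(v, v)
  · have hB : 0 < B.ncard := (ncard_pos (hA.subset hBA)).2 ⟨e, he, hloop⟩
    have hAe0 : A \ {e} = ∅ := (ncard_eq_zero hA.sdiff).1 (by omega)
    refine .inl ⟨hloop, fun f hf hvf => by_contra fun hfe => ?_⟩
    exact (hAe0 ▸ ⟨⟨hf, hvf⟩, hfe⟩ : f ∈ (∅ : Set E))
  · have hBAe : B ⊆ A \ {e} := fun f hf => ⟨hBA hf, by rintro rfl; exact hloop hf.2⟩
    have := ncard_le_ncard hBAe hA.sdiff
    have hB0 : B = ∅ := (ncard_eq_zero (hA.subset hBA)).1 (by omega)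
    obtain ⟨g, hg⟩ := ncard_eq_one.1 (show (A \ {e}).ncard = 1 by omega)
    have hgA : g ∈ A \ {e} := hg ▸ rfl
    obtain ⟨v', hv'⟩ := Sym2.mem_iff_exists.1 hgA.1.2
    refine .inr ⟨g, hgA.1.1, v', hgA.2, hv', ?_, fun f hf hvf => ?_⟩
    · rintro rfl
      exact (hB0 ▸ ⟨hgA.1.1, hv'⟩ : g ∈ (∅ : Set E))
    · by_cases hfe : f = e
      · exact .inl hfe
      · have hf' : f ∈ A \ {e} := ⟨⟨hf, hvf⟩, hfe⟩
        rw [hg] at hf'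
        exact .inr hf'

end Multigraph

open scoped Matroid

section MatroidLemmas

variable {M : Matroid α} {C₁ C₂ X : Set α} {e : α}

lemma _root_.Matroid.IsNonloop.eRk_contractElem_add_one (he : M.IsNonloop e) (heX : e ∉ X) :
    (M ／ {e}).eRk X + 1 = M.eRk (insert e X) := by
  obtain ⟨I, hI, heI⟩ :=
    he.indep.subset_isBasis'_of_subset (singleton_subset_iff.2 (mem_insert e X))
  have hIe := hI.contract_isBasis'_sdiff_sdiff_of_subset heI
  rw [insert_sdiff_self_of_notMem heX] at hIe
  rw [← hIe.encard_eq_eRk, ← hI.encard_eq_eRk, encard_sdiff_singleton_add_one (heI rfl)]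

lemma _root_.Matroid.IsCircuit.eq_of_sdiff_singleton_eq (h₁ : M.IsCircuit C₁)
    (h₂ : M.IsCircuit C₂) (h : C₁ \ {e} = C₂ \ {e}) : C₁ = C₂ := by
  by_cases he₁ : e ∈ C₁ <;> by_cases he₂ : e ∈ C₂
  · rw [← insert_sdiff_self_of_mem he₁, h, insert_sdiff_self_of_mem he₂]
  · refine (h₂.eq_of_subset_isCircuit h₁ ?_).symm
    rw [← sdiff_singleton_eq_self he₂, ← h]
    exact sdiff_subset
  · refine h₁.eq_of_subset_isCircuit h₂ ?_
    rw [← sdiff_singleton_eq_self he₁, h]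
    exact sdiff_subset
  · rwa [sdiff_singleton_eq_self he₁, sdiff_singleton_eq_self he₂] at h

end MatroidLemmas

section MatroidBridge

variable {M : Matroid α} {C D : Set α}

lemma eRk_eq_matroid_eRk (M : Matroid α) (X : Set α) : eRk M X = M.eRk X := by
  obtain ⟨I, hI⟩ := M.exists_isBasis' X
  refine le_antisymm (iSup₂_le fun J hJ => hJ.1.encard_le_eRk_of_subset hJ.2) ?_
  rw [← hI.encard_eq_eRk]
  exact le_iSup₂_of_le I ⟨hI.indep, hI.subset⟩ le_rfl

lemma circuit_iff_isCircuit : Circuit M C ↔ M.IsCircuit C :=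
  minimal_iff_forall_ssubset.symm

lemma contract_eq_matroid_contract (M : Matroid α) (C : Set α) : contract M C = M ／ C := rfl

lemma doubleCircuit_iff : DoubleCircuit M D ↔
    D ⊆ M.E ∧ D.Finite ∧ M.eRk D + 2 = D.encard ∧
      ∀ d ∈ D, M.eRk (D \ {d}) = M.eRk D := by
  simp only [DoubleCircuit, eRk_eq_matroid_eRk]

end MatroidBridge

namespace DoubleCircuit

variable {M : Matroid α} {C D X : Set α} {e : α}

lemma eRk_add_two (hD : DoubleCircuit M D) : M.eRk D + 2 = D.encard :=
  (doubleCircuit_iff.1 hD).2.2.1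

lemma eRk_sdiff_singleton (hD : DoubleCircuit M D) (he : e ∈ D) :
    M.eRk (D \ {e}) = M.eRk D :=
  (doubleCircuit_iff.1 hD).2.2.2 e he

lemma eRk_ne_top (hD : DoubleCircuit M D) : M.eRk D ≠ ⊤ :=
  ((M.eRk_le_encard D).trans_lt hD.2.1.encard_lt_top).ne

lemma mem_closure_sdiff_singleton (hD : DoubleCircuit M D) (he : e ∈ D) :
    e ∈ M.closure (D \ {e}) := by
  by_contra h
  have := M.eRk_insert_eq_add_one ⟨hD.1 he, h⟩
  rw [insert_sdiff_self_of_mem he, hD.eRk_sdiff_singleton he] at this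
  exact (ENat.lt_add_one_iff hD.eRk_ne_top).2 le_rfl |>.ne this

lemma eq_of_subset_of_eRk_add_two_le (hD : DoubleCircuit M D) (hXD : X ⊆ D)
    (hX : M.eRk X + 2 ≤ X.encard) : X = D := by
  by_contra hne
  obtain ⟨d, hdD, hdX⟩ := exists_of_ssubset (hXD.ssubset_of_ne hne)
  have hXd : X ⊆ D \ {d} := subset_sdiff_singleton hXD hdX
  have hrk : M.eRk (D \ {d}) ≤ M.eRk X + ((D \ {d}) \ X).encard :=
    (M.eRk_le_eRk_add_eRk_sdiff hXd).trans (by gcongr; exact M.eRk_le_encard _)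
  have : M.eRk D + 3 ≤ M.eRk D + 2 := calc
    M.eRk D + 3 = M.eRk (D \ {d}) + 3 := by rw [hD.eRk_sdiff_singleton hdD]
    _ ≤ M.eRk X + ((D \ {d}) \ X).encard + 3 := by gcongr
    _ = (M.eRk X + 2) + ((D \ {d}) \ X).encard + 1 := by ring
    _ ≤ X.encard + ((D \ {d}) \ X).encard + 1 := by gcongr
    _ = M.eRk D + 2 := by
      rw [add_comm X.encard, encard_sdiff_add_encard_of_subset hXd,
        encard_sdiff_singleton_add_one hdD, hD.eRk_add_two]
  exact absurd ((WithTop.add_le_add_iff_left hD.eRk_ne_top).1 this) (by decide)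

lemma contractElem (hD : DoubleCircuit M D) (he : M.IsNonloop e) (heD : e ∈ D) :
    DoubleCircuit (M ／ {e}) (D \ {e}) := by
  have hrk : ∀ X ⊆ D, e ∈ X → (M ／ {e}).eRk (X \ {e}) + 1 = M.eRk X := fun X _ heX => by
    rw [he.eRk_contractElem_add_one (fun h => h.2 rfl), insert_sdiff_self_of_mem heX]
  refine doubleCircuit_iff.2 ⟨sdiff_subset_sdiff_left hD.1, hD.2.1.sdiff, ?_, fun d hd => ?_⟩
  · refine ENat.add_left_injective_of_ne_top ENat.one_ne_top ?_
    dsimp only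
    rw [add_right_comm, hrk D Subset.rfl heD, hD.eRk_add_two, encard_sdiff_singleton_add_one heD]
  · refine ENat.add_left_injective_of_ne_top ENat.one_ne_top ?_
    dsimp only
    rw [sdiff_right_comm, hrk (D \ {d}) sdiff_subset ⟨heD, fun (h : e = d) => hd.2 h.symm⟩,
      hrk D Subset.rfl heD, hD.eRk_sdiff_singleton hd.1]

lemma isCircuit_contractElem (hD : DoubleCircuit M D) (he : M.IsNonloop e) (heD : e ∈ D)
    (hDe : ¬ M.IsCircuit (D \ {e})) (hC : M.IsCircuit C) (hCD : C ⊆ D) :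
    (M ／ {e}).IsCircuit (C \ {e}) := by
  by_cases heC : e ∈ C
  · refine hC.contractElem_isCircuit ((nontrivial_iff_ne_singleton heC).2 ?_) heC
    rintro rfl
    exact he.not_isLoop (Matroid.singleton_isCircuit.1 hC)
  rw [sdiff_singleton_eq_self heC]
  have hcl : e ∉ M.closure C := by
    intro hcl
    have hrk : M.eRk (insert e C) + 2 ≤ (insert e C).encard := by
      rw [← M.eRk_closure_eq, Matroid.closure_insert_eq_of_mem_closure hcl, M.eRk_closure_eq,
        encard_insert_of_notMem heC, ← hC.eRk_add_one_eq, add_assoc, one_add_one_eq_two]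
    refine hDe ?_
    rwa [← hD.eq_of_subset_of_eRk_add_two_le (insert_subset heD hCD) hrk,
      insert_sdiff_self_of_notMem heC]
  refine Matroid.isCircuit_iff_dep_forall_sdiff_singleton_indep.2
    ⟨hC.contract_dep (disjoint_singleton_left.2 heC), fun x hx => ?_⟩
  have heCx : e ∉ C \ {x} := fun h => heC h.1
  rw [he.contractElem_indep_iff, (hC.sdiff_singleton_indep hx).insert_indep_iff_of_notMem heCx,
    hC.closure_sdiff_singleton_eq]
  exact ⟨heCx, he.mem_ground, hcl⟩

lemma image_sdiff_circuits (hD : DoubleCircuit M D) (he : M.IsNonloop e) (heD : e ∈ D)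
    (hDe : ¬ M.IsCircuit (D \ {e})) :
    (· \ {e}) '' {C | M.IsCircuit C ∧ C ⊆ D} =
      {C | (M ／ {e}).IsCircuit C ∧ C ⊆ D \ {e}} := by
  ext C'
  constructor
  · rintro ⟨C, ⟨hC, hCD⟩, rfl⟩
    exact ⟨hD.isCircuit_contractElem he heD hDe hC hCD, sdiff_subset_sdiff_left hCD⟩
  · rintro ⟨hC', hC'D⟩
    obtain ⟨C, hC, hC'C, hCC'⟩ := hC'.exists_subset_isCircuit_of_contract
    refine ⟨C, ⟨hC, hCC'.trans (union_subset (hC'D.trans sdiff_subset)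
      (singleton_subset_iff.2 heD))⟩, Subset.antisymm ?_ ?_⟩
    · rwa [sdiff_subset_iff, union_comm]
    · exact subset_sdiff_singleton hC'C fun h => (hC'D h).2 rfl

lemma encard_circuits_contractElem (hD : DoubleCircuit M D) (he : M.IsNonloop e) (heD : e ∈ D)
    (hDe : ¬ M.IsCircuit (D \ {e})) :
    {C | (M ／ {e}).IsCircuit C ∧ C ⊆ D \ {e}}.encard =
      {C | M.IsCircuit C ∧ C ⊆ D}.encard := by
  rw [← hD.image_sdiff_circuits he heD hDe, InjOn.encard_image]
  exact fun C₁ h₁ C₂ h₂ h => h₁.1.eq_of_sdiff_singleton_eq h₂.1 h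

end DoubleCircuit

namespace Multigraph.IsBicircularOf

variable {V E : Type*} {G : Multigraph V E} {M : Matroid E} {X : Set E} {v v' x : V} {e g : E}

lemma isNonloop (hM : G.IsBicircularOf M) (e : E) : M.IsNonloop e :=
  Matroid.indep_singleton.1 ((hM.2 _).2 (bicircIndep_singleton e))

lemma notMem_closure_of_isolated_loop (hM : G.IsBicircularOf M) (hloop : G.inc e = s(x, x))
    (hx : ∀ f ∈ X, x ∈ G.inc f → f = e) : e ∉ M.closure (X \ {e}) := by
  obtain ⟨I, hI⟩ := M.exists_isBasis (X \ {e}) (hM.1 ▸ subset_univ _)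
  have hxI : ∀ f ∈ I, x ∉ G.inc f :=
    fun f hf hxf => (hI.subset hf).2 (hx f (hI.subset hf).1 hxf)
  have hins := (hM.2 _).2 (bicircIndep_insert_loop hloop hxI ((hM.2 I).1 hI.indep))
  rw [hI.indep.insert_indep_iff_of_notMem fun h => (hI.subset h).2 rfl,
    hI.closure_eq_closure] at hins
  exact hins.2

lemma not_isCircuit_of_pendant (hM : G.IsBicircularOf M) (hv : ∀ f ∈ X, v ∈ G.inc f → f = g)
    (hg : G.inc g = s(v, v')) (hvv' : v ≠ v') (hgX : g ∈ X) : ¬ M.IsCircuit X := fun hC =>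
  hC.dep.not_indep <| (hM.2 X).2 <|
    BicircIndep.of_diff_pendant hv hg hvv' ((hM.2 _).1 (hC.sdiff_singleton_indep hgX))

end Multigraph.IsBicircularOf

theorem contract_subdivided_edge_general {V E : Type*} (G : Multigraph V E) (M : Matroid E)
    (hM : Multigraph.IsBicircularOf G M) (D : Set E) (hD : DoubleCircuit M D)
    (e : E) (he : e ∈ D) (hsub : ∃ v ∈ G.inc e, G.degree D v = 2) :
    DoubleCircuit (contract M {e}) (D \ {e}) ∧
      {C : Set E | Circuit (contract M {e}) C ∧ C ⊆ D \ {e}}.encard =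
        {C : Set E | Circuit M C ∧ C ⊆ D}.encard := by
  obtain ⟨v, hve, hdeg⟩ := hsub
  have hDe : ¬ M.IsCircuit (D \ {e}) := by
    rcases G.degree_eq_two_cases hD.2.1 he hve hdeg with
      ⟨hloop, hv⟩ | ⟨g, hgD, v', hge, hg, hvv', hv⟩
    · exact absurd (hD.mem_closure_sdiff_singleton he)
        (hM.notMem_closure_of_isolated_loop hloop hv)
    · exact hM.not_isCircuit_of_pendant (fun f hf hvf => (hv f hf.1 hvf).resolve_left hf.2)
        hg hvv' ⟨hgD, hge⟩
  simp only [contract_eq_matroid_contract, circuit_iff_isCircuit]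
  exact ⟨hD.contractElem (hM.isNonloop e) he,
    hD.encard_circuits_contractElem (hM.isNonloop e) he hDe⟩

/-- Suppose every component of `G[D]` contains a cycle, `D` is a double
circuit of `B(G)` of rank at least `1`, and `e ∈ D` is a subdivided edge (it has an endpoint
of degree `2` in `G[D]`). Then `D \ {e}` is a double circuit of `B(G) / e` of the same
degree as `D`. -/
theorem contract_subdivided_edge {V E : Type*} (G : Multigraph V E) (M : Matroid E)
    (hM : Multigraph.IsBicircularOf G M) (D : Set E) (hD : DoubleCircuit M D)
    (hcyc : ∀ v ∈ G.verts D, ∃ C : Set E, G.IsCycleIn D C ∧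
      ∃ w ∈ G.verts C, G.Reachable D v w)
    (e : E) (he : e ∈ D) (hsub : ∃ v ∈ G.inc e, G.degree D v = 2)
    (hr : 1 ≤ eRk M D) :
    DoubleCircuit (contract M {e}) (D \ {e}) ∧
      {C : Set E | Circuit (contract M {e}) C ∧ C ⊆ D \ {e}}.encard =
        {C : Set E | Circuit M C ∧ C ⊆ D}.encard :=
  contract_subdivided_edge_general G M hM D hD e he hsub

end Paper
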